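/- arXiv:2111.08602 — 2 statements merged into one kernel-verified Lean document; each statement's English description precedes it below -/
import Mathlib

section
/- Let n ≥ 2 and let k_{i,j} ∈ ℝ for 1 ≤ i, j ≤ n satisfy (A2): k_{i,i} = 0, k_{i,j} > 0 for i ≠ j. Fix indices i, j, l with i ≠ j and j ≠ l. Then for every y ∈ B_{i,j} and every y' ∈ B_{j,l}, the Euclidean distance satisfies |y − y'| ≥ (k_{i,j} + k_{j,l} − k_{i,l})/2. -/
/-!
On `B i j` the coordinate gap `y i - y j` equals `k i j`, while on the closure of `Q` the gap
`y i - y l` is at most `k i l`; hence `y l - y j ≥ k i j - k i l`. On `B j l` the gap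
`y' j - y' l` equals `k j l`. Adding, `(y' j - y j) + (y l - y' l) ≥ k i j + k j l - k i l`,
and each of the two coordinate differences is at most the Euclidean distance `|y - y'|`.
-/

lemma le_add_of_mem_closure_setOf_lt {ι : Type*} [Fintype ι] {k : ι → ι → ℝ}
    {y : EuclideanSpace ℝ ι} (hy : y ∈ closure {z | ∀ i j, i ≠ j → z i < z j + k i j})
    {i j : ι} (hij : i ≠ j) : y i ≤ y j + k i j := by
  have hsub : closure {z : EuclideanSpace ℝ ι | ∀ i j, i ≠ j → z i < z j + k i j} ⊆
      closure {z | z i < z j + k i j} :=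
    closure_mono fun z hz => hz i j hij
  exact closure_lt_subset_le (by fun_prop) (by fun_prop) (hsub hy)

lemma sub_le_dist_apply {ι : Type*} [Fintype ι] (y y' : EuclideanSpace ℝ ι) (m : ι) :
    y m - y' m ≤ dist y y' :=
  (le_abs_self _).trans (PiLp.dist_apply_le y y' m)

theorem stmt_5_general (n : ℕ) (k : Fin n → Fin n → ℝ)
    (hdiag : ∀ i, k i i = 0)
    (Q : Set (EuclideanSpace ℝ (Fin n)))
    (hQ : Q = {y | ∀ i j, i ≠ j → y i < y j + k i j})
    (B : Fin n → Fin n → Set (EuclideanSpace ℝ (Fin n)))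
    (hB : ∀ i j, B i j = {y | y i = y j + k i j} ∩ closure Q)
    (i j l : Fin n) :
    ∀ y ∈ B i j, ∀ y' ∈ B j l,
      dist y y' ≥ (k i j + k j l - k i l) / 2 := by
  intro y hy y' hy'
  rw [hB] at hy hy'
  obtain ⟨hyij : y i = y j + k i j, hyQ⟩ := hy
  obtain ⟨hy'jl : y' j = y' l + k j l, -⟩ := hy'
  have hyil : y i ≤ y l + k i l := by
    rcases eq_or_ne i l with rfl | hil
    · simp [hdiag]
    · exact le_add_of_mem_closure_setOf_lt (hQ ▸ hyQ) hil
  have hj := sub_le_dist_apply y' y j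
  have hl := sub_le_dist_apply y y' l
  rw [dist_comm] at hj
  linarith

/-- Under (A2), for fixed `i ≠ j`, `j ≠ l`, every `y ∈ B i j` and
`y' ∈ B j l` satisfy `dist y y' ≥ (k i j + k j l − k i l)/2`. -/
theorem stmt_5 (n : ℕ) (hn : 2 ≤ n) (k : Fin n → Fin n → ℝ)
    (hdiag : ∀ i, k i i = 0) (hpos : ∀ i j, i ≠ j → 0 < k i j)
    (Q : Set (EuclideanSpace ℝ (Fin n)))
    (hQ : Q = {y | ∀ i j, i ≠ j → y i < y j + k i j})
    (B : Fin n → Fin n → Set (EuclideanSpace ℝ (Fin n)))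
    (hB : ∀ i j, B i j = {y | y i = y j + k i j} ∩ closure Q)
    (i j l : Fin n) (hij : i ≠ j) (hjl : j ≠ l) :
    ∀ y ∈ B i j, ∀ y' ∈ B j l,
      dist y y' ≥ (k i j + k j l - k i l) / 2 :=
  stmt_5_general n k hdiag Q hQ B hB i j l
end

section
/- Let n ≥ 2 and let k_{i,j} ∈ ℝ for 1 ≤ i, j ≤ n satisfy (A2): k_{i,i} = 0, k_{i,j} > 0 for i ≠ j, and (A4): k_{i,j} + k_{j,l} > k_{i,l} for all indices with i ≠ j and j ≠ l. Then there exists a constant c > 0 such that for all indices i, j, l with i ≠ j and j ≠ l, and all y ∈ B_{i,j}, y' ∈ B_{j,l}, one has |y − y'| ≥ c. Equivalently, c := min over all such triples of the distance between B_{i,j} and B_{j,l} is strictly positive. -/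
lemma coord_dist_le {n : ℕ} (y y' : EuclideanSpace ℝ (Fin n)) (a : Fin n) :
    |y a - y' a| ≤ dist y y' := by
  have h := EuclideanSpace.dist_eq y y'
  rw [h]
  have h1 : dist (y a) (y' a) ^ 2 ≤ ∑ i, dist (y i) (y' i) ^ 2 :=
    Finset.single_le_sum (f := fun i => dist (y i) (y' i) ^ 2) (fun i _ => sq_nonneg _) (Finset.mem_univ a)
  calc |y a - y' a| = dist (y a) (y' a) := (Real.dist_eq _ _).symm
    _ = Real.sqrt (dist (y a) (y' a) ^ 2) := by
        rw [Real.sqrt_sq dist_nonneg]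
    _ ≤ _ := Real.sqrt_le_sqrt h1

/-- Under (A2) and (A4), there is a constant `c > 0` such that
for all `i ≠ j`, `j ≠ l`, all `y ∈ B i j` and `y' ∈ B j l` satisfy
`dist y y' ≥ c`. -/
theorem stmt_6 (n : ℕ) (hn : 2 ≤ n) (k : Fin n → Fin n → ℝ)
    (hdiag : ∀ i, k i i = 0) (hpos : ∀ i j, i ≠ j → 0 < k i j)
    (hA4 : ∀ i j l, i ≠ j → j ≠ l → k i j + k j l > k i l)
    (Q : Set (EuclideanSpace ℝ (Fin n)))
    (hQ : Q = {y | ∀ i j, i ≠ j → y i < y j + k i j})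
    (B : Fin n → Fin n → Set (EuclideanSpace ℝ (Fin n)))
    (hB : ∀ i j, B i j = {y | y i = y j + k i j} ∩ closure Q) :
    ∃ c : ℝ, 0 < c ∧
      ∀ i j l : Fin n, i ≠ j → j ≠ l →
        ∀ y ∈ B i j, ∀ y' ∈ B j l, dist y y' ≥ c := by
  have hn0 : 0 < n := by omega
  haveI : Nonempty (Fin n) := ⟨⟨0, hn0⟩⟩
  -- closure of Q satisfies weak inequalities
  have hclos : ∀ y ∈ closure Q, ∀ a b : Fin n, a ≠ b → y a ≤ y b + k a b := by
    intro y hy a b hab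
    have hsub : closure Q ⊆ {y : EuclideanSpace ℝ (Fin n) | y a ≤ y b + k a b} := by
      apply closure_minimal
      · intro z hz
        rw [hQ] at hz
        exact le_of_lt (hz a b hab)
      · have hc : Continuous fun y : EuclideanSpace ℝ (Fin n) => (y b + k a b) - y a := by
          fun_prop
        have := isClosed_le (continuous_const : Continuous fun _ : EuclideanSpace ℝ (Fin n) => (0:ℝ)) hc
        convert this using 1
        ext z; simp [sub_nonneg]
    exact hsub hy
  set f : Fin n × Fin n × Fin n → ℝ := fun p =>
    if p.1 ≠ p.2.1 ∧ p.2.1 ≠ p.2.2 then (k p.1 p.2.1 + k p.2.1 p.2.2 - k p.1 p.2.2) / 2 else 1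
    with hf
  refine ⟨Finset.univ.inf' ⟨(Classical.arbitrary _, Classical.arbitrary _, Classical.arbitrary _),
    Finset.mem_univ _⟩ f, ?_, ?_⟩
  · refine (Finset.lt_inf'_iff _).2 ?_
    intro p _
    simp only [hf]
    by_cases hp : p.1 ≠ p.2.1 ∧ p.2.1 ≠ p.2.2
    · rw [if_pos hp]
      have := hA4 p.1 p.2.1 p.2.2 hp.1 hp.2
      linarith
    · simp [hp]
  · intro i j l hij hjl y hy y' hy'
    rw [hB] at hy hy'
    obtain ⟨hy1, hy2⟩ := hy
    obtain ⟨hy'1, hy'2⟩ := hy'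
    have hle : Finset.univ.inf' _ f ≤ f (i, j, l) := Finset.inf'_le _ (Finset.mem_univ _)
    have hfval : f (i, j, l) = (k i j + k j l - k i l) / 2 := by
      simp only [hf]; rw [if_pos ⟨hij, hjl⟩]
    -- key estimate
    have h1 : y i = y j + k i j := hy1
    have h2 : y' j = y' l + k j l := hy'1
    have h3 : y' i ≤ y' l + k i l := by
      by_cases hil : i = l
      · subst hil; rw [hdiag]; simp
      · exact hclos y' hy'2 i l hil
    have key : (y i - y' i) - (y j - y' j) ≥ k i j + k j l - k i l := by linarith
    have hi := coord_dist_le y y' i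
    have hj := coord_dist_le y y' j
    have habs1 : y i - y' i ≤ dist y y' := (le_abs_self _).trans hi
    have habs2 : -(y j - y' j) ≤ dist y y' := (neg_le_abs _).trans hj
    have : k i j + k j l - k i l ≤ 2 * dist y y' := by linarith
    rw [ge_iff_le]
    calc Finset.univ.inf' _ f ≤ f (i, j, l) := hle
      _ = (k i j + k j l - k i l) / 2 := hfval
      _ ≤ dist y y' := by linarith
end
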